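/- Structure of the quotient of H ∩ S by its central 2-torsion: the subgroup Z = {(I,I), (−I,−I), (I,−I), (−I,I)} is a central (hence normal) subgroup of H ∩ S, and the quotient group (H ∩ S)/Z is isomorphic to the semidirect product ℂˣ ⋊ ℤ/2ℤ, where the nontrivial element of ℤ/2ℤ acts on ℂˣ by inversion. In other words, there is a central extension 1 → μ₂ × μ₂ → H ∩ S → ℂˣ ⋊ ℤ/2ℤ → 1. -/

import Mathlib

open Matrix

set_option maxHeartbeats 1000000
set_option synthInstance.maxHeartbeats 400000

abbrev SL2 := Matrix.SpecialLinearGroup (Fin 2) ℂ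

instance : Fact (Even (Fintype.card (Fin 2))) := ⟨by simp⟩

/-- The subgroup `H = {(A, εA) : A ∈ SL(2,ℂ), ε ∈ {1,−1}}` of `SL(2,ℂ) × SL(2,ℂ)`. -/
def Hsub : Subgroup (SL2 × SL2) where
  carrier := {p | p.2 = p.1 ∨ p.2 = -p.1}
  one_mem' := Or.inl rfl
  mul_mem' := by
    intro a b ha hb
    simp only [Set.mem_setOf_eq, Prod.snd_mul, Prod.fst_mul] at *
    rcases ha with ha | ha <;> rcases hb with hb | hb <;> rw [ha, hb] <;>
      simp [mul_neg, neg_mul, neg_neg]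
  inv_mem' := by
    intro a ha
    simp only [Set.mem_setOf_eq, Prod.snd_inv, Prod.fst_inv] at *
    rcases ha with ha | ha <;> rw [ha] <;> simp [inv_neg]

/-- The subgroup `S` of `SL(2,ℂ) × SL(2,ℂ)` consisting of the pairs `(A,B)` with `A`
and `B` both diagonal or both antidiagonal. -/
def Ssub : Subgroup (SL2 × SL2) where
  carrier := {p |
    ((p.1 : Matrix (Fin 2) (Fin 2) ℂ) 0 1 = 0 ∧ (p.1 : Matrix (Fin 2) (Fin 2) ℂ) 1 0 = 0 ∧
     (p.2 : Matrix (Fin 2) (Fin 2) ℂ) 0 1 = 0 ∧ (p.2 : Matrix (Fin 2) (Fin 2) ℂ) 1 0 = 0) ∨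
    ((p.1 : Matrix (Fin 2) (Fin 2) ℂ) 0 0 = 0 ∧ (p.1 : Matrix (Fin 2) (Fin 2) ℂ) 1 1 = 0 ∧
     (p.2 : Matrix (Fin 2) (Fin 2) ℂ) 0 0 = 0 ∧ (p.2 : Matrix (Fin 2) (Fin 2) ℂ) 1 1 = 0)}
  one_mem' := by
    left
    simp [Matrix.SpecialLinearGroup.coe_one, Matrix.one_apply]
  mul_mem' := by
    intro a b ha hb
    rcases ha with ⟨h1, h2, h3, h4⟩ | ⟨h1, h2, h3, h4⟩ <;>
      rcases hb with ⟨g1, g2, g3, g4⟩ | ⟨g1, g2, g3, g4⟩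
    · left
      refine ⟨?_, ?_, ?_, ?_⟩ <;>
        simp [Prod.fst_mul, Prod.snd_mul, Matrix.mul_apply, Fin.sum_univ_two,
          h1, h2, h3, h4, g1, g2, g3, g4]
    · right
      refine ⟨?_, ?_, ?_, ?_⟩ <;>
        simp [Prod.fst_mul, Prod.snd_mul, Matrix.mul_apply, Fin.sum_univ_two,
          h1, h2, h3, h4, g1, g2, g3, g4]
    · right
      refine ⟨?_, ?_, ?_, ?_⟩ <;>
        simp [Prod.fst_mul, Prod.snd_mul, Matrix.mul_apply, Fin.sum_univ_two,
          h1, h2, h3, h4, g1, g2, g3, g4]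
    · left
      refine ⟨?_, ?_, ?_, ?_⟩ <;>
        simp [Prod.fst_mul, Prod.snd_mul, Matrix.mul_apply, Fin.sum_univ_two,
          h1, h2, h3, h4, g1, g2, g3, g4]
  inv_mem' := by
    intro a ha
    rcases ha with ⟨h1, h2, h3, h4⟩ | ⟨h1, h2, h3, h4⟩
    · left
      refine ⟨?_, ?_, ?_, ?_⟩ <;>
        simp [Prod.fst_inv, Prod.snd_inv, Matrix.SpecialLinearGroup.coe_inv,
          Matrix.adjugate_fin_two, h1, h2, h3, h4]
    · right
      refine ⟨?_, ?_, ?_, ?_⟩ <;>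
        simp [Prod.fst_inv, Prod.snd_inv, Matrix.SpecialLinearGroup.coe_inv,
          Matrix.adjugate_fin_two, h1, h2, h3, h4]

/-- The subgroup `H ∩ S` of `SL(2,ℂ) × SL(2,ℂ)`. -/
abbrev HS := (Hsub ⊓ Ssub : Subgroup (SL2 × SL2))

/-- The central subgroup `Z = {(I,I), (−I,−I), (I,−I), (−I,I)}` of `H ∩ S`. -/
def Zsub : Subgroup ↥HS where
  carrier := {x | (x : SL2 × SL2) = (1, 1) ∨ (x : SL2 × SL2) = (-1, -1) ∨
    (x : SL2 × SL2) = (1, -1) ∨ (x : SL2 × SL2) = (-1, 1)}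
  one_mem' := Or.inl rfl
  mul_mem' := by
    intro a b ha hb
    have hab : ((a * b : ↥HS) : SL2 × SL2) = (a : SL2 × SL2) * (b : SL2 × SL2) := rfl
    rcases ha with h | h | h | h <;> rcases hb with h' | h' | h' | h' <;>
      · simp only [Set.mem_setOf_eq, hab, h, h', Prod.mk_mul_mk,
          one_mul, mul_one, neg_mul, mul_neg, neg_neg]
        simp [Prod.mk.injEq]
  inv_mem' := by
    intro a ha
    have hai : ((a⁻¹ : ↥HS) : SL2 × SL2) = ((a : SL2 × SL2))⁻¹ := rfl
    rcases ha with h | h | h | h <;>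
      · simp only [Set.mem_setOf_eq, hai, h, Prod.inv_mk, inv_neg, inv_one]
        simp [Prod.mk.injEq]

instance Zsub_normal : Zsub.Normal := by
  constructor
  intro n hn g
  have hval : ((g * n * g⁻¹ : ↥HS) : SL2 × SL2)
      = (g : SL2 × SL2) * (n : SL2 × SL2) * ((g : SL2 × SL2))⁻¹ := rfl
  have c : ∀ (x e : SL2), e = 1 ∨ e = -1 → x * e * x⁻¹ = e := by
    rintro x e (rfl | rfl)
    · rw [mul_one, mul_inv_cancel]
    · rw [mul_neg_one, neg_mul, mul_inv_cancel]
  have conj : ∀ e1 e2 : SL2, (e1 = 1 ∨ e1 = -1) → (e2 = 1 ∨ e2 = -1) →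
      (g : SL2 × SL2) * (e1, e2) * ((g : SL2 × SL2))⁻¹ = (e1, e2) := by
    intro e1 e2 h1 h2
    have hc1 := c (g : SL2 × SL2).1 e1 h1
    have hc2 := c (g : SL2 × SL2).2 e2 h2
    apply Prod.ext <;>
      simp_all [Prod.fst_mul, Prod.snd_mul, Prod.fst_inv, Prod.snd_inv]
  rcases hn with h | h | h | h
  · exact Or.inl (by rw [hval, h]; exact conj 1 1 (Or.inl rfl) (Or.inl rfl))
  · exact Or.inr (Or.inl
      (by rw [hval, h]; exact conj (-1) (-1) (Or.inr rfl) (Or.inr rfl)))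
  · exact Or.inr (Or.inr (Or.inl
      (by rw [hval, h]; exact conj 1 (-1) (Or.inl rfl) (Or.inr rfl))))
  · exact Or.inr (Or.inr (Or.inr
      (by rw [hval, h]; exact conj (-1) 1 (Or.inr rfl) (Or.inl rfl))))

/-- The inversion automorphism of the abelian group `ℂˣ`. -/
def invAut : MulAut ℂˣ := MulEquiv.inv ℂˣ

lemma invAut_sq : invAut * invAut = 1 := by
  apply MulEquiv.ext
  intro x
  rw [MulAut.mul_apply, MulAut.one_apply]
  exact inv_inv x

/-- The homomorphism `ℤ/2ℤ →* MulAut N` determined by an automorphism of order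
dividing 2, sending the nontrivial element to that automorphism. -/
def hom2 {N : Type*} [Group N] (σ : MulAut N) (h : σ * σ = 1) :
    Multiplicative (ZMod 2) →* MulAut N where
  toFun e := σ ^ (Multiplicative.toAdd e).val
  map_one' := by simp
  map_mul' a b := by
    have h2 : σ ^ 2 = 1 := by rw [pow_two]; exact h
    show σ ^ (Multiplicative.toAdd (a * b)).val = _
    rw [toAdd_mul, ZMod.val_add, ← pow_eq_pow_mod _ h2, pow_add]

/-- The homomorphism `ℤ/2ℤ →* Aut(ℂˣ)` sending the nontrivial element to inversion. -/
def psi : Multiplicative (ZMod 2) →* MulAut ℂˣ := hom2 invAut invAut_sq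

/-! The first component `A` of an element of `H ∩ S` is `diag(a, a⁻¹)` or `antidiag(b, -b⁻¹)`.
Sending it to `(a², 0)`, resp. `(b², 1)`, in `ℂˣ ⋊ ℤ/2ℤ` is a homomorphism: squaring kills the
sign `-1` picked up by a product of two antidiagonal matrices, and conjugating a diagonal matrix
by an antidiagonal one inverts it. It is onto since every unit of `ℂ` is a square. Its kernel is
`A = ±I`, and since `B = ±A` in `H`, these are exactly the elements of `Z`. -/

lemma IsAlgClosed.exists_sq_eq_units {k : Type*} [Field k] [IsAlgClosed k] (u : kˣ) :
    ∃ a : kˣ, a ^ 2 = u := by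
  obtain ⟨z, hz⟩ := IsAlgClosed.exists_pow_nat_eq (u : k) two_pos
  have hz0 : z ≠ 0 := by
    rintro rfl
    exact u.ne_zero (by simpa using hz.symm)
  exact ⟨Units.mk0 z hz0, Units.ext (by simpa using hz)⟩

lemma Matrix.SpecialLinearGroup.coe_eq_one_or_neg_one_iff {n R : Type*} [Fintype n]
    [DecidableEq n] [CommRing R] [Fact (Even (Fintype.card n))] (A : SpecialLinearGroup n R) :
    ((A : Matrix n n R) = 1 ∨ (A : Matrix n n R) = -1) ↔ A = 1 ∨ A = -1 :=
  ⟨Or.imp (fun h => Subtype.ext h) (fun h => Subtype.ext h), by rintro (rfl | rfl) <;> simp⟩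

section DiagAntidiag

variable {R : Type*} [CommRing R]

def diagMat (a : Rˣ) : Matrix (Fin 2) (Fin 2) R := !![(a : R), 0; 0, ↑a⁻¹]

def antidiagMat (b : Rˣ) : Matrix (Fin 2) (Fin 2) R := !![0, (b : R); -↑b⁻¹, 0]

@[simp] lemma det_diagMat (a : Rˣ) : (diagMat a).det = 1 := by
  simp [diagMat, det_fin_two]

@[simp] lemma det_antidiagMat (b : Rˣ) : (antidiagMat b).det = 1 := by
  simp [antidiagMat, det_fin_two]

lemma diagMat_one : diagMat (1 : Rˣ) = 1 := by
  ext i j; fin_cases i <;> fin_cases j <;> simp [diagMat]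

lemma diagMat_mul_diagMat (a b : Rˣ) : diagMat a * diagMat b = diagMat (a * b) := by
  simp [diagMat, mul_comm]

lemma diagMat_mul_antidiagMat (a b : Rˣ) : diagMat a * antidiagMat b = antidiagMat (a * b) := by
  simp [diagMat, antidiagMat, mul_comm]

lemma antidiagMat_mul_diagMat (a b : Rˣ) :
    antidiagMat a * diagMat b = antidiagMat (a * b⁻¹) := by
  simp [diagMat, antidiagMat, mul_comm]

lemma antidiagMat_mul_antidiagMat (a b : Rˣ) :
    antidiagMat a * antidiagMat b = diagMat (-(a * b⁻¹)) := by
  simp [diagMat, antidiagMat, mul_comm]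

def IsDiagOrAntidiag (A : Matrix (Fin 2) (Fin 2) R) : Prop :=
  (∃ a, A = diagMat a) ∨ ∃ b, A = antidiagMat b

lemma isDiagOrAntidiag_of_det_eq_one {A : Matrix (Fin 2) (Fin 2) R} (hdet : A.det = 1)
    (hA : (A 0 1 = 0 ∧ A 1 0 = 0) ∨ (A 0 0 = 0 ∧ A 1 1 = 0)) : IsDiagOrAntidiag A := by
  rw [det_fin_two] at hdet
  rcases hA with ⟨h01, h10⟩ | ⟨h00, h11⟩
  · have h : A 0 0 * A 1 1 = 1 := by simpa [h01, h10] using hdet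
    refine Or.inl ⟨⟨A 0 0, A 1 1, h, by rw [mul_comm, h]⟩, ?_⟩
    ext i j; fin_cases i <;> fin_cases j <;> simp [diagMat, h01, h10]
  · have h : A 0 1 * -A 1 0 = 1 := by simpa [h00, h11] using hdet
    refine Or.inr ⟨⟨A 0 1, -A 1 0, h, by rw [mul_comm, h]⟩, ?_⟩
    ext i j; fin_cases i <;> fin_cases j <;> simp [antidiagMat, h00, h11]

lemma diagMat_eq_one_iff (a : Rˣ) : diagMat a = 1 ↔ a = 1 := by
  refine ⟨fun h => Units.ext ?_, fun h => h ▸ diagMat_one⟩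
  simpa [diagMat] using congrFun (congrFun h 0) 0

lemma diagMat_eq_neg_one_iff (a : Rˣ) : diagMat a = -1 ↔ a = -1 := by
  refine ⟨fun h => Units.ext ?_, ?_⟩
  · simpa [diagMat] using congrFun (congrFun h 0) 0
  · rintro rfl
    ext i j; fin_cases i <;> fin_cases j <;> simp [diagMat]

lemma antidiagMat_ne_one [Nontrivial R] (b : Rˣ) : antidiagMat b ≠ 1 := fun h => by
  simpa [antidiagMat] using congrFun (congrFun h 0) 0

lemma antidiagMat_ne_neg_one [Nontrivial R] (b : Rˣ) : antidiagMat b ≠ -1 := fun h => by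
  simpa [antidiagMat] using congrFun (congrFun h 0) 0

def diagSL (a : Rˣ) : SpecialLinearGroup (Fin 2) R := ⟨diagMat a, det_diagMat a⟩

def antidiagSL (b : Rˣ) : SpecialLinearGroup (Fin 2) R := ⟨antidiagMat b, det_antidiagMat b⟩

end DiagAntidiag

section Semidirect

open SemidirectProduct

lemma psi_ofAdd_one_apply (u : ℂˣ) : psi (Multiplicative.ofAdd 1) u = u⁻¹ := rfl

lemma inr_ofAdd_one_mul_inl (u : ℂˣ) :
    (inr (.ofAdd 1) * inl u : ℂˣ ⋊[psi] Multiplicative (ZMod 2)) = inl u⁻¹ * inr (.ofAdd 1) := by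
  rw [← psi_ofAdd_one_apply, inl_aut, map_inv, inv_mul_cancel_right]

noncomputable def toSemidirect (A : Matrix (Fin 2) (Fin 2) ℂ) :
    ℂˣ ⋊[psi] Multiplicative (ZMod 2) :=
  if h : A 0 0 ≠ 0 then .inl (Units.mk0 (A 0 0 ^ 2) (pow_ne_zero 2 h))
  else if h' : A 0 1 ≠ 0 then .inl (Units.mk0 (A 0 1 ^ 2) (pow_ne_zero 2 h')) * .inr (.ofAdd 1)
  else 1

lemma toSemidirect_diagMat (a : ℂˣ) : toSemidirect (diagMat a) = .inl (a ^ 2) := by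
  simp [toSemidirect, diagMat, Units.ext_iff, -map_pow]

lemma toSemidirect_antidiagMat (b : ℂˣ) :
    toSemidirect (antidiagMat b) = .inl (b ^ 2) * .inr (.ofAdd 1) := by
  simp [toSemidirect, antidiagMat, Units.ext_iff, -map_pow]

lemma toSemidirect_mul {A B : Matrix (Fin 2) (Fin 2) ℂ} (hA : IsDiagOrAntidiag A)
    (hB : IsDiagOrAntidiag B) : toSemidirect (A * B) = toSemidirect A * toSemidirect B := by
  rcases hA with ⟨a, rfl⟩ | ⟨a, rfl⟩ <;> rcases hB with ⟨b, rfl⟩ | ⟨b, rfl⟩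
  · rw [diagMat_mul_diagMat, toSemidirect_diagMat, toSemidirect_diagMat, toSemidirect_diagMat,
      mul_pow, map_mul]
  · rw [diagMat_mul_antidiagMat, toSemidirect_diagMat, toSemidirect_antidiagMat,
      toSemidirect_antidiagMat, mul_pow, map_mul, mul_assoc]
  · rw [antidiagMat_mul_diagMat, toSemidirect_diagMat, toSemidirect_antidiagMat,
      toSemidirect_antidiagMat, mul_assoc, inr_ofAdd_one_mul_inl, ← mul_assoc, ← map_mul,
      mul_pow, inv_pow]
  · rw [antidiagMat_mul_antidiagMat, toSemidirect_diagMat, toSemidirect_antidiagMat,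
      toSemidirect_antidiagMat, mul_assoc, ← mul_assoc (inr _), inr_ofAdd_one_mul_inl,
      mul_assoc, ← map_mul inr, ← mul_assoc, ← map_mul, neg_sq, mul_pow, inv_pow,
      show (Multiplicative.ofAdd (1 : ZMod 2)) * .ofAdd 1 = 1 from rfl, map_one, mul_one]

lemma toSemidirect_eq_one_iff {A : Matrix (Fin 2) (Fin 2) ℂ} (hA : IsDiagOrAntidiag A) :
    toSemidirect A = 1 ↔ A = 1 ∨ A = -1 := by
  rcases hA with ⟨a, rfl⟩ | ⟨b, rfl⟩
  · rw [toSemidirect_diagMat, diagMat_eq_one_iff, diagMat_eq_neg_one_iff,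
      map_eq_one_iff _ inl_injective]
    simp only [Units.ext_iff, Units.val_pow_eq_pow_val, Units.val_one, Units.val_neg]
    exact sq_eq_one_iff
  · refine iff_of_false (fun h => ?_) (by simp [antidiagMat_ne_one, antidiagMat_ne_neg_one])
    have hright := congrArg right h
    rw [toSemidirect_antidiagMat, mul_right, right_inl, right_inr, one_mul] at hright
    exact absurd hright (by decide)

end Semidirect

lemma isDiagOrAntidiag_fst (x : HS) :
    IsDiagOrAntidiag ((x : SL2 × SL2).1 : Matrix (Fin 2) (Fin 2) ℂ) := by
  refine isDiagOrAntidiag_of_det_eq_one (x : SL2 × SL2).1.prop ?_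
  rcases (Subgroup.mem_inf.mp x.2).2 with ⟨h01, h10, -, -⟩ | ⟨h00, h11, -, -⟩
  exacts [Or.inl ⟨h01, h10⟩, Or.inr ⟨h00, h11⟩]

lemma mk_self_mem_HS {A : SL2}
    (hA : (A 0 1 = 0 ∧ A 1 0 = 0) ∨ (A 0 0 = 0 ∧ A 1 1 = 0)) : (A, A) ∈ HS :=
  ⟨Or.inl rfl, hA.imp (fun h => ⟨h.1, h.2, h.1, h.2⟩) (fun h => ⟨h.1, h.2, h.1, h.2⟩)⟩

lemma mem_Zsub_iff (x : HS) : x ∈ Zsub ↔ (x : SL2 × SL2).1 = 1 ∨ (x : SL2 × SL2).1 = -1 := by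
  obtain ⟨⟨A, B⟩, hx⟩ := x
  change (A, B) = (1, 1) ∨ (A, B) = (-1, -1) ∨ (A, B) = (1, -1) ∨ (A, B) = (-1, 1) ↔
    A = 1 ∨ A = -1
  obtain rfl | rfl : B = A ∨ B = -A := (Subgroup.mem_inf.mp hx).1 <;>
    simp only [Prod.ext_iff, neg_eq_iff_eq_neg, neg_neg, and_self] <;> tauto

lemma Zsub_le_center : Zsub ≤ Subgroup.center HS := by
  intro z hz
  rw [Subgroup.mem_center_iff]
  intro g
  apply Subtype.ext
  rcases hz with h | h | h | h <;> simp [h, Prod.ext_iff]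

noncomputable def hsToSemidirect : HS →* ℂˣ ⋊[psi] Multiplicative (ZMod 2) where
  toFun x := toSemidirect ((x : SL2 × SL2).1 : Matrix (Fin 2) (Fin 2) ℂ)
  map_one' := by simpa [diagMat_one] using toSemidirect_diagMat 1
  map_mul' x y := toSemidirect_mul (isDiagOrAntidiag_fst x) (isDiagOrAntidiag_fst y)

lemma ker_hsToSemidirect : hsToSemidirect.ker = Zsub := by
  ext x
  rw [MonoidHom.mem_ker, mem_Zsub_iff]
  exact (toSemidirect_eq_one_iff (isDiagOrAntidiag_fst x)).trans
    (SpecialLinearGroup.coe_eq_one_or_neg_one_iff _)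

open SemidirectProduct in
lemma hsToSemidirect_surjective : Function.Surjective hsToSemidirect := by
  intro g
  obtain ⟨a, ha⟩ := IsAlgClosed.exists_sq_eq_units g.left
  rw [← inl_left_mul_inr_right g, ← ha]
  rcases (by decide : ∀ t : Multiplicative (ZMod 2), t = 1 ∨ t = .ofAdd 1) g.right with ht | ht
  · refine ⟨⟨(diagSL a, diagSL a), mk_self_mem_HS (Or.inl (by simp [diagSL, diagMat]))⟩, ?_⟩
    rw [ht, map_one, mul_one]
    exact toSemidirect_diagMat a
  · refine ⟨⟨(antidiagSL a, antidiagSL a),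
      mk_self_mem_HS (Or.inr (by simp [antidiagSL, antidiagMat]))⟩, ?_⟩
    rw [ht]
    exact toSemidirect_antidiagMat a

/-- **Structure of the quotient of `H ∩ S` by its central 2-torsion:** the subgroup
`Z = {(I,I), (−I,−I), (I,−I), (−I,I)}` is central in `H ∩ S`, and the quotient
`(H ∩ S)/Z` is isomorphic to `ℂˣ ⋊ ℤ/2ℤ`, the nontrivial element of `ℤ/2ℤ` acting on
`ℂˣ` by inversion; i.e. there is a central extension
`1 → μ₂ × μ₂ → H ∩ S → ℂˣ ⋊ ℤ/2ℤ → 1`. -/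
theorem H_inf_S_central_extension :
    Zsub ≤ Subgroup.center ↥HS ∧
    Nonempty ((↥HS ⧸ Zsub) ≃* (ℂˣ ⋊[psi] Multiplicative (ZMod 2))) :=
  ⟨Zsub_le_center, ⟨(QuotientGroup.quotientMulEquivOfEq ker_hsToSemidirect.symm).trans
    (QuotientGroup.quotientKerEquivOfSurjective _ hsToSemidirect_surjective)⟩⟩
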